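/- If a payment rule is user-addition monotone, then it is both fraud-proof and bribery-proof. -/

import Mathlib

open Finset

/-- An instance `I = (N, C, w)`: a finite nonempty set of users `N`, a finite set of
artists `C`, and nonnegative real engagement weights `w i j` (supported on
`users × artists`), such that every user has positive total engagement. -/
structure Inst where
  users : Finset ℕ
  artists : Finset ℕ
  w : ℕ → ℕ → ℝ
  users_nonempty : users.Nonempty
  w_nonneg : ∀ i j, 0 ≤ w i j
  w_supp : ∀ i j, w i j ≠ 0 → i ∈ users ∧ j ∈ artists
  w_pos : ∀ i ∈ users, 0 < ∑ j ∈ artists, w i j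

/-- `φ` is a payment rule (with revenue share `α`) on the class of instances satisfying `P`:
payments to artists are nonnegative and total `α·|N|`. -/
def IsRuleOn (P : Inst → Prop) (α : ℝ) (φ : Inst → ℕ → ℝ) : Prop :=
  ∀ I : Inst, P I →
    (∀ j ∈ I.artists, 0 ≤ φ I j) ∧ (∑ j ∈ I.artists, φ I j) = α * I.users.card

/-- `φ` is a payment rule (with revenue share `α`). -/
abbrev IsRule (α : ℝ) (φ : Inst → ℕ → ℝ) : Prop := IsRuleOn (fun _ => True) α φ

/-- Fraud-proofness, relative to a class `P` of instances: for instances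
`I = (N \ N̂, C, w)` and `I' = (N, C, w')` agreeing on the genuine users `N \ N̂`,
and any coalition `Ĉ ⊆ C`, the gain `φ_{I'}(Ĉ) − φ_I(Ĉ)` is at most `|N̂|`. -/
def FraudProofOn (P : Inst → Prop) (φ : Inst → ℕ → ℝ) : Prop :=
  ∀ I I' : Inst, P I → P I' →
    ∀ Nhat : Finset ℕ, Nhat ⊆ I'.users → I.users = I'.users \ Nhat →
      I.artists = I'.artists →
      (∀ i ∈ I.users, ∀ j ∈ I.artists, I.w i j = I'.w i j) →
      ∀ Chat ⊆ I.artists,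
        (∑ j ∈ Chat, φ I' j) - (∑ j ∈ Chat, φ I j) ≤ (Nhat.card : ℝ)

/-- Fraud-proofness. -/
abbrev FraudProof (φ : Inst → ℕ → ℝ) : Prop := FraudProofOn (fun _ => True) φ

/-- Single-user fraud-proofness: fraud-proofness restricted to `|N̂| = 1`. -/
def SingleFraudProof (φ : Inst → ℕ → ℝ) : Prop :=
  ∀ I I' : Inst,
    ∀ Nhat : Finset ℕ, Nhat.card = 1 → Nhat ⊆ I'.users → I.users = I'.users \ Nhat →
      I.artists = I'.artists →
      (∀ i ∈ I.users, ∀ j ∈ I.artists, I.w i j = I'.w i j) →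
      ∀ Chat ⊆ I.artists,
        (∑ j ∈ Chat, φ I' j) - (∑ j ∈ Chat, φ I j) ≤ 1

open Classical in
/-- The number of users whose engagement vectors differ between two instances
(on the same user and artist sets). -/
noncomputable def bribedCount (I I' : Inst) : ℕ :=
  (I.users.filter (fun i => ∃ j ∈ I.artists, I.w i j ≠ I'.w i j)).card

/-- Bribery-proofness, relative to a class `P` of instances: for instances `I, I'` on the
same users and artists whose engagement vectors differ for exactly `k` users, and any
coalition `Ĉ ⊆ C`, the gain `φ_{I'}(Ĉ) − φ_I(Ĉ)` is at most `k`. -/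
def BriberyProofOn (P : Inst → Prop) (φ : Inst → ℕ → ℝ) : Prop :=
  ∀ I I' : Inst, P I → P I' →
    I.users = I'.users → I.artists = I'.artists →
    ∀ Chat ⊆ I.artists,
      (∑ j ∈ Chat, φ I' j) - (∑ j ∈ Chat, φ I j) ≤ (bribedCount I I' : ℝ)

/-- Bribery-proofness. -/
abbrev BriberyProof (φ : Inst → ℕ → ℝ) : Prop := BriberyProofOn (fun _ => True) φ

/-- Single-user bribery-proofness: bribery-proofness restricted to `k = 1`. -/
def SingleBriberyProof (φ : Inst → ℕ → ℝ) : Prop :=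
  ∀ I I' : Inst,
    I.users = I'.users → I.artists = I'.artists →
    bribedCount I I' = 1 →
    ∀ Chat ⊆ I.artists,
      (∑ j ∈ Chat, φ I' j) - (∑ j ∈ Chat, φ I j) ≤ 1

/-- Anonymity (relative to a class `P`): permuting the labels of the users does not
affect the payoffs of the artists. -/
def AnonymousOn (P : Inst → Prop) (φ : Inst → ℕ → ℝ) : Prop :=
  ∀ I I' : Inst, P I → P I' →
    I.users = I'.users → I.artists = I'.artists →
    ∀ σ : Equiv.Perm ℕ, (∀ i ∈ I.users, σ i ∈ I.users) →
      (∀ i ∈ I.users, ∀ j ∈ I.artists, I.w i j = I'.w (σ i) j) →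
      ∀ j ∈ I.artists, φ I j = φ I' j

/-- Neutrality (relative to a class `P`): permuting the labels of the artists permutes
their payoffs. -/
def NeutralOn (P : Inst → Prop) (φ : Inst → ℕ → ℝ) : Prop :=
  ∀ I I' : Inst, P I → P I' →
    I.users = I'.users → I.artists = I'.artists →
    ∀ σ : Equiv.Perm ℕ, (∀ j ∈ I.artists, σ j ∈ I.artists) →
      (∀ i ∈ I.users, ∀ j ∈ I.artists, I.w i j = I'.w i (σ j)) →
      ∀ j ∈ I.artists, φ I j = φ I' (σ j)

/-- Neutrality. -/
abbrev Neutral (φ : Inst → ℕ → ℝ) : Prop := NeutralOn (fun _ => True) φ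

/-- No free-ridership (relative to a class `P`): an artist with zero total engagement
receives zero payment. -/
def NoFreeRideOn (P : Inst → Prop) (φ : Inst → ℕ → ℝ) : Prop :=
  ∀ I : Inst, P I → ∀ j ∈ I.artists, (∑ i ∈ I.users, I.w i j) = 0 → φ I j = 0

/-- Sybil-proofness: artists outside `C*` cannot change their combined payoff by
splitting/merging (user-by-user engagement towards `C*` and user totals outside `C*`
are preserved). -/
def SybilProof (φ : Inst → ℕ → ℝ) : Prop :=
  ∀ I I' : Inst, I.users = I'.users → I.artists ⊆ I'.artists →
    ∀ Cstar ⊆ I.artists,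
      (∀ i ∈ I.users, ∀ j ∈ Cstar, I.w i j = I'.w i j) →
      (∀ i ∈ I.users, ∑ j ∈ I.artists \ Cstar, I.w i j = ∑ j ∈ I'.artists \ Cstar, I'.w i j) →
      ∑ j ∈ I.artists \ Cstar, φ I j = ∑ j ∈ I'.artists \ Cstar, φ I' j

/-- Strong Sybil-proofness: as Sybil-proofness, but only total engagements
(aggregated over users) are preserved. -/
def StrongSybilProof (φ : Inst → ℕ → ℝ) : Prop :=
  ∀ I I' : Inst, I.users = I'.users → I.artists ⊆ I'.artists →
    ∀ Cstar ⊆ I.artists,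
      (∀ j ∈ Cstar, ∑ i ∈ I.users, I.w i j = ∑ i ∈ I'.users, I'.w i j) →
      (∑ i ∈ I.users, ∑ j ∈ I.artists \ Cstar, I.w i j
        = ∑ i ∈ I'.users, ∑ j ∈ I'.artists \ Cstar, I'.w i j) →
      ∑ j ∈ I.artists \ Cstar, φ I j = ∑ j ∈ I'.artists \ Cstar, φ I' j

/-- Engagement monotonicity: if artist `j*`'s engagement weakly increases while every
other artist's engagement weakly decreases, then `j*`'s payoff does not decrease. -/
def EngagementMonotone (φ : Inst → ℕ → ℝ) : Prop :=
  ∀ I I' : Inst, I.users = I'.users → I.artists = I'.artists →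
    ∀ jstar ∈ I.artists,
      (∀ i ∈ I.users, I.w i jstar ≤ I'.w i jstar) →
      (∀ i ∈ I.users, ∀ j ∈ I.artists, j ≠ jstar → I'.w i j ≤ I.w i j) →
      φ I jstar ≤ φ I' jstar

/-- Pigou-Dalton consistency: transferring `δ > 0` of engagement with artist `j` from a
user `i` with more engagement to a user `i'` with less (keeping everything else fixed,
and not overshooting) does not decrease `j`'s payoff. -/
def PigouDalton (φ : Inst → ℕ → ℝ) : Prop :=
  ∀ I I' : Inst, I.users = I'.users → I.artists = I'.artists →
    ∀ i ∈ I.users, ∀ i' ∈ I.users, i ≠ i' →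
      ∀ j ∈ I.artists, ∀ δ : ℝ,
        0 < δ → 0 < I.w i j - δ →
        I'.w i j = I.w i j - δ →
        I'.w i' j = I.w i' j + δ →
        I'.w i' j ≤ I'.w i j →
        (∀ k ∈ I.users, ∀ j' ∈ I.artists, j' ≠ j → I.w k j' = I'.w k j') →
        (∀ k ∈ I.users, k ≠ i → k ≠ i' → I.w k j = I'.w k j) →
        φ I j ≤ φ I' j

/-- User-addition monotonicity: adding one new user (with an arbitrary engagement
vector) does not decrease any artist's payoff. -/
def UserAdditionMonotone (φ : Inst → ℕ → ℝ) : Prop :=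
  ∀ I I' : Inst, I.artists = I'.artists →
    ∀ i₀ : ℕ, i₀ ∉ I.users → I'.users = insert i₀ I.users →
      (∀ i ∈ I.users, ∀ j ∈ I.artists, I.w i j = I'.w i j) →
      ∀ j ∈ I.artists, φ I j ≤ φ I' j

/-- The single-user instance `I_i = ({i}, C, w_i)` extracted from an instance `I`. -/
def Inst.single (I : Inst) (i : ℕ) (hi : i ∈ I.users) : Inst where
  users := {i}
  artists := I.artists
  w := fun i' j => if i' = i then I.w i j else 0
  users_nonempty := Finset.singleton_nonempty i
  w_nonneg := by
    intro i' j
    try dsimp only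
    split
    · exact I.w_nonneg i j
    · exact le_refl 0
  w_supp := by
    intro i' j h
    try dsimp only at h
    split at h
    · rename_i hii
      exact ⟨by simp [hii], (I.w_supp i j h).2⟩
    · exact absurd rfl h
  w_pos := by
    intro i' hi'
    have h : i' = i := Finset.mem_singleton.mp hi'
    simpa [h] using I.w_pos i hi

/-- User-additivity: each artist's payoff is the sum of the payoffs they would obtain in
the single-user instances. -/
def UserAdditive (φ : Inst → ℕ → ℝ) : Prop :=
  ∀ I : Inst, ∀ j ∈ I.artists,
    φ I j = ∑ i ∈ I.users.attach, φ (I.single i.1 i.2) j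

/-- The `GlobalProp` rule: artists are paid proportionally to their share of total
engagement on the platform. -/
noncomputable def globalProp (α : ℝ) (I : Inst) (j : ℕ) : ℝ :=
  α * I.users.card * (∑ i ∈ I.users, I.w i j) /
    (∑ i ∈ I.users, ∑ j' ∈ I.artists, I.w i j')

/-- The `UserProp` rule: an `α` fraction of each user's fee is split proportionally to
that user's engagement. -/
noncomputable def userProp (α : ℝ) (I : Inst) (j : ℕ) : ℝ :=
  α * ∑ i ∈ I.users, (I.w i j / ∑ j' ∈ I.artists, I.w i j')

open Classical in
/-- The `UserEQ` rule: an `α` fraction of each user's fee is split equally among the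
artists with which the user has positive engagement. -/
noncomputable def userEQ (α : ℝ) (I : Inst) (j : ℕ) : ℝ :=
  α * ∑ i ∈ I.users,
    ((if 0 < I.w i j then (1 : ℝ) else 0) /
      ((I.artists.filter (fun j' => 0 < I.w i j')).card : ℝ))

/-- The `ScaledUserProp` rule, given a choice `γ I` of the scaling parameter for each
instance: user `i` contributes `min(γ·‖w_i‖₁, 1)`, split proportionally to `w_i`. -/
noncomputable def scaledUserProp (γ : Inst → ℝ) (I : Inst) (j : ℕ) : ℝ :=
  ∑ i ∈ I.users,
    (min (γ I * ∑ j' ∈ I.artists, I.w i j') 1 * (I.w i j / ∑ j' ∈ I.artists, I.w i j'))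

/-! Adding users one at a time, monotonicity shows that removing any set of users can only
lower every artist's payment. Since the total payment drops by exactly `α` per removed user,
the payments to any coalition `Ĉ` can rise by at most `α ≤ 1` per user added, and hence
by at most `|N̂|` under fraud. A bribed instance and the original one share their restriction
to the unbribed users, so bribing `k` users gains at most what adding them to that common
restriction does. -/

namespace Inst

theorem ext' {I J : Inst} (hu : I.users = J.users) (ha : I.artists = J.artists)
    (hw : I.w = J.w) : I = J := by
  cases I; cases J; simp_all

theorem w_eq_zero_of_notMem {I : Inst} {i j : ℕ} (h : ¬(i ∈ I.users ∧ j ∈ I.artists)) :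
    I.w i j = 0 :=
  not_imp_comm.mp (I.w_supp i j) h

def restrict (I : Inst) (S : Finset ℕ) (hS : S.Nonempty) (hsub : S ⊆ I.users) : Inst where
  users := S
  artists := I.artists
  w i j := if i ∈ S then I.w i j else 0
  users_nonempty := hS
  w_nonneg i j := by
    split
    · exact I.w_nonneg i j
    · exact le_rfl
  w_supp i j h := by
    split at h
    · exact ⟨‹i ∈ S›, (I.w_supp i j h).2⟩
    · exact absurd rfl h
  w_pos i hi := by simpa [hi] using I.w_pos i (hsub hi)

theorem restrict_eq {I J : Inst} (hsub : I.users ⊆ J.users) (hart : I.artists = J.artists)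
    (hw : ∀ i ∈ I.users, ∀ j ∈ I.artists, I.w i j = J.w i j) :
    J.restrict I.users I.users_nonempty hsub = I := by
  refine ext' rfl hart.symm (funext₂ fun i j => ?_)
  by_cases hi : i ∈ I.users
  · by_cases hj : j ∈ I.artists
    · simp [restrict, hi, hw i hi j hj]
    · simp only [restrict, hi, if_true]
      rw [w_eq_zero_of_notMem (I := J) (by rw [← hart]; tauto),
        w_eq_zero_of_notMem (I := I) (by tauto)]
  · simp [restrict, hi, w_eq_zero_of_notMem (I := I) (by tauto)]

theorem restrict_self (I : Inst) (hS : I.users.Nonempty) (hsub : I.users ⊆ I.users) :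
    I.restrict I.users hS hsub = I :=
  restrict_eq hsub rfl fun _ _ _ _ => rfl

end Inst

section PaymentRule

variable {α : ℝ} {φ : Inst → ℕ → ℝ}

theorem IsRule.sum_nonneg (hφ : IsRule α φ) {I : Inst} {Chat : Finset ℕ}
    (hChat : Chat ⊆ I.artists) : 0 ≤ ∑ j ∈ Chat, φ I j :=
  Finset.sum_nonneg fun j hj => (hφ I trivial).1 j (hChat hj)

theorem IsRule.sum_le (hφ : IsRule α φ) {I : Inst} {Chat : Finset ℕ}
    (hChat : Chat ⊆ I.artists) : ∑ j ∈ Chat, φ I j ≤ α * I.users.card :=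
  (hφ I trivial).2 ▸ Finset.sum_le_sum_of_subset_of_nonneg hChat
    fun j hj _ => (hφ I trivial).1 j hj

theorem IsRule.sum_sub_sum_le (hφ : IsRule α φ) {I J : Inst} (hart : I.artists = J.artists)
    {Chat : Finset ℕ} (hChat : Chat ⊆ J.artists)
    (hle : ∀ j ∈ J.artists \ Chat, φ I j ≤ φ J j) :
    ∑ j ∈ Chat, φ J j - ∑ j ∈ Chat, φ I j ≤ α * (J.users.card - I.users.card) := by
  have hJ : ∑ j ∈ J.artists \ Chat, φ J j + ∑ j ∈ Chat, φ J j = α * J.users.card := by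
    rw [Finset.sum_sdiff hChat]; exact (hφ J trivial).2
  have hI : ∑ j ∈ J.artists \ Chat, φ I j + ∑ j ∈ Chat, φ I j = α * I.users.card := by
    rw [Finset.sum_sdiff hChat, ← hart]; exact (hφ I trivial).2
  have := Finset.sum_le_sum hle
  linarith

end PaymentRule

namespace UserAdditionMonotone

variable {φ : Inst → ℕ → ℝ}

theorem apply_restrict_le (hmono : UserAdditionMonotone φ) (I : Inst) {S : Finset ℕ}
    (hS : S.Nonempty) (hsub : S ⊆ I.users) {j : ℕ} (hj : j ∈ I.artists) :
    φ (I.restrict S hS hsub) j ≤ φ I j := by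
  obtain ⟨n, hn⟩ : ∃ n, (I.users \ S).card = n := ⟨_, rfl⟩
  induction n generalizing S with
  | zero =>
    obtain rfl : S = I.users :=
      hsub.antisymm (Finset.sdiff_eq_empty_iff_subset.mp (Finset.card_eq_zero.mp hn))
    rw [Inst.restrict_self]
  | succ n ih =>
    obtain ⟨i₀, hi₀⟩ : (I.users \ S).Nonempty := Finset.card_pos.mp (by omega)
    obtain ⟨hi₀I, hi₀S⟩ := Finset.mem_sdiff.mp hi₀
    have hsub' : insert i₀ S ⊆ I.users := Finset.insert_subset hi₀I hsub
    calc φ (I.restrict S hS hsub) j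
        ≤ φ (I.restrict (insert i₀ S) (Finset.insert_nonempty _ _) hsub') j :=
          hmono (I.restrict S hS hsub) (I.restrict (insert i₀ S) _ hsub') rfl i₀ hi₀S rfl
            (fun i (hi : i ∈ S) _ _ => by simp [Inst.restrict, hi]) j hj
      _ ≤ φ I j :=
          ih _ hsub' (by rw [Finset.sdiff_insert, Finset.card_erase_of_mem hi₀, hn]; rfl)

theorem apply_le (hmono : UserAdditionMonotone φ) {I J : Inst} (hsub : I.users ⊆ J.users)
    (hart : I.artists = J.artists) (hw : ∀ i ∈ I.users, ∀ j ∈ I.artists, I.w i j = J.w i j)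
    {j : ℕ} (hj : j ∈ J.artists) : φ I j ≤ φ J j :=
  Inst.restrict_eq hsub hart hw ▸ hmono.apply_restrict_le J I.users_nonempty hsub hj

theorem sum_sub_sum_le {α : ℝ} (hmono : UserAdditionMonotone φ) (hφ : IsRule α φ)
    (hα : α ≤ 1) {I J : Inst} (hsub : I.users ⊆ J.users) (hart : I.artists = J.artists)
    (hw : ∀ i ∈ I.users, ∀ j ∈ I.artists, I.w i j = J.w i j)
    {Chat : Finset ℕ} (hChat : Chat ⊆ J.artists) :
    ∑ j ∈ Chat, φ J j - ∑ j ∈ Chat, φ I j ≤ (J.users \ I.users).card := by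
  have hgain := hφ.sum_sub_sum_le hart hChat fun j hj =>
    hmono.apply_le hsub hart hw (Finset.mem_sdiff.mp hj).1
  have hcard : ((J.users \ I.users).card : ℝ) = J.users.card - I.users.card := by
    rw [Finset.card_sdiff_of_subset hsub, Nat.cast_sub (Finset.card_le_card hsub)]
  have hpos : (0 : ℝ) ≤ (J.users \ I.users).card := Nat.cast_nonneg _
  rw [hcard] at hpos ⊢
  nlinarith

theorem fraudProof {α : ℝ} (hmono : UserAdditionMonotone φ) (hφ : IsRule α φ)
    (hα : α ≤ 1) : FraudProof φ := by
  intro I I' _ _ Nhat hNhat husers hart hw Chat hChat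
  have hsub : I.users ⊆ I'.users := husers ▸ Finset.sdiff_subset
  have := hmono.sum_sub_sum_le hφ hα hsub hart hw (hart ▸ hChat)
  rwa [husers, Finset.sdiff_sdiff_eq_self hNhat] at this

theorem briberyProof {α : ℝ} (hmono : UserAdditionMonotone φ) (hφ : IsRule α φ)
    (hα : α ≤ 1) : BriberyProof φ := by
  classical
  intro I I' _ _ husers hart Chat hChat
  unfold bribedCount
  set B := I.users.filter fun i => ∃ j ∈ I.artists, I.w i j ≠ I'.w i j
  have hB : B ⊆ I.users := Finset.filter_subset _ _
  rcases (I.users \ B).eq_empty_or_nonempty with hall | hhonest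
  · have hBeq : B = I.users := hB.antisymm (Finset.sdiff_eq_empty_iff_subset.mp hall)
    have h1 := hφ.sum_le (hart ▸ hChat : Chat ⊆ I'.artists)
    have h2 := hφ.sum_nonneg hChat
    have h3 : (0 : ℝ) ≤ I'.users.card := Nat.cast_nonneg _
    rw [hBeq, husers]
    nlinarith
  · have hS : I.users \ B ⊆ I.users := Finset.sdiff_subset
    set R := I.restrict (I.users \ B) hhonest hS
    have hRw : ∀ i ∈ R.users, ∀ j ∈ R.artists, R.w i j = I'.w i j := by
      intro i (hi : i ∈ I.users \ B) j hj
      have hiB : i ∉ B := (Finset.mem_sdiff.mp hi).2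
      simp only [B, Finset.mem_filter, not_and, not_exists, not_not] at hiB
      simp only [R, Inst.restrict, if_pos hi]
      exact hiB (hS hi) j hj
    have hgain := hmono.sum_sub_sum_le hφ hα (husers ▸ hS : R.users ⊆ I'.users) hart hRw
      (hart ▸ hChat)
    have hloss : ∑ j ∈ Chat, φ R j ≤ ∑ j ∈ Chat, φ I j :=
      Finset.sum_le_sum fun j hj => hmono.apply_restrict_le I hhonest hS (hChat hj)
    rw [← husers, show R.users = I.users \ B from rfl, Finset.sdiff_sdiff_eq_self hB]
      at hgain
    linarith

end UserAdditionMonotone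

theorem stmt10 (α : ℝ) (hα : α ∈ Set.Ioc (0 : ℝ) 1)
    (φ : Inst → ℕ → ℝ) (hφ : IsRule α φ)
    (hmono : UserAdditionMonotone φ) :
    FraudProof φ ∧ BriberyProof φ :=
  ⟨hmono.fraudProof hφ hα.2, hmono.briberyProof hφ hα.2⟩
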